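/- Let B be a countable atomless Boolean ring without identity (and nonzero). Then the space of maximal ideals of B has cardinality 2^{ℵ₀}; in particular, B has exactly 2^{ℵ₀} distinct maximal ideals. -/
import Mathlib

/-- A (two-sided) ideal of a possibly non-unital ring, given as a set. -/
def IsIdeal {B : Type*} [NonUnitalRing B] (I : Set B) : Prop :=
  (0 : B) ∈ I ∧ (∀ x ∈ I, ∀ y ∈ I, x + y ∈ I) ∧ (∀ x ∈ I, -x ∈ I) ∧
    ∀ b : B, ∀ x ∈ I, b * x ∈ I ∧ x * b ∈ I

/-- A maximal ideal of a possibly non-unital ring. -/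
def IsMaxIdeal {B : Type*} [NonUnitalRing B] (I : Set B) : Prop :=
  IsIdeal I ∧ I ≠ Set.univ ∧
    ∀ J : Set B, IsIdeal J → I ⊆ J → J = I ∨ J = Set.univ

section BoolAux

variable {B : Type*} [NonUnitalRing B]

theorem bool_add_self (hBool : ∀ x : B, x * x = x) (x : B) : x + x = 0 := by
  have h := hBool (x + x)
  simp only [add_mul, mul_add] at h
  simp only [hBool] at h
  have h2 : x + x + (x + x) = 0 + (x + x) := by rw [zero_add]; exact h
  exact add_right_cancel h2

theorem bool_neg (hBool : ∀ x : B, x * x = x) (x : B) : -x = x :=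
  neg_eq_of_add_eq_zero_left (bool_add_self hBool x)

theorem bool_comm (hBool : ∀ x : B, x * x = x) (x y : B) : x * y = y * x := by
  have h := hBool (x + y)
  simp only [add_mul, mul_add] at h
  simp only [hBool] at h
  rw [add_assoc] at h
  have h3 := add_left_cancel h
  rw [← add_assoc] at h3
  have h4 : y * x + x * y + y = 0 + y := by rw [zero_add]; exact h3
  have h2 : y * x + x * y = 0 := add_right_cancel h4
  calc x * y = (y * x + x * y) + x * y := by rw [h2, zero_add]
    _ = y * x + (x * y + x * y) := add_assoc _ _ _
    _ = y * x := by rw [bool_add_self hBool, add_zero]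

variable (hBool : ∀ x : B, x * x = x)
  (hatomless : ∀ m : B, m ≠ 0 → ∃ a : B, a ≠ 0 ∧ a ≠ m ∧ a * m = a)

/-- The chosen proper nonzero subelement of a nonzero element. -/
noncomputable def bchild (m : {x : B // x ≠ 0}) : B :=
  Classical.choose (hatomless m.1 m.2)

theorem bchild_spec (m : {x : B // x ≠ 0}) :
    bchild hatomless m ≠ 0 ∧ bchild hatomless m ≠ m.1 ∧
      bchild hatomless m * m.1 = bchild hatomless m :=
  Classical.choose_spec (hatomless m.1 m.2)

/-- The two children of a node in the binary tree. -/
noncomputable def bnode (m : {x : B // x ≠ 0}) (b : Bool) : {x : B // x ≠ 0} :=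
  if b then
    ⟨m.1 + bchild hatomless m, by
      intro h
      apply (bchild_spec hatomless m).2.1
      have h3 : m.1 + (m.1 + bchild hatomless m) = m.1 + 0 := by rw [h, add_zero]
      rw [← add_assoc, bool_add_self hBool, zero_add, add_zero] at h3
      exact h3⟩
  else ⟨bchild hatomless m, (bchild_spec hatomless m).1⟩

theorem bnode_le (m : {x : B // x ≠ 0}) (b : Bool) :
    (bnode hBool hatomless m b).1 * m.1 = (bnode hBool hatomless m b).1 := by
  cases b <;> simp only [bnode, if_true, if_false, Bool.false_eq_true]
  · exact (bchild_spec hatomless m).2.2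
  · rw [add_mul, hBool, (bchild_spec hatomless m).2.2]

theorem bnode_disj (m : {x : B // x ≠ 0}) :
    (bnode hBool hatomless m false).1 * (bnode hBool hatomless m true).1 = 0 := by
  simp only [bnode, if_true, if_false, Bool.false_eq_true]
  rw [mul_add, hBool, (bchild_spec hatomless m).2.2, bool_add_self hBool]

variable [Nontrivial B]

/-- The branch of the binary tree along `f`. -/
noncomputable def bA (f : ℕ → Bool) : ℕ → {x : B // x ≠ 0}
  | 0 => ⟨Classical.choose (exists_ne (0 : B)), Classical.choose_spec (exists_ne (0 : B))⟩
  | n + 1 => bnode hBool hatomless (bA f n) (f n)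

theorem bA_congr {f g : ℕ → Bool} (n : ℕ) (h : ∀ i < n, f i = g i) :
    bA hBool hatomless f n = bA hBool hatomless g n := by
  induction n with
  | zero => rfl
  | succ n ih =>
      have h1 : bA hBool hatomless f n = bA hBool hatomless g n :=
        ih fun i hi => h i (Nat.lt_succ_of_lt hi)
      show bnode hBool hatomless _ _ = bnode hBool hatomless _ _
      rw [h1, h n (Nat.lt_succ_self n)]

theorem bA_chain (f : ℕ → Bool) {k n : ℕ} (hkn : k ≤ n) :
    (bA hBool hatomless f n).1 * (bA hBool hatomless f k).1 = (bA hBool hatomless f n).1 := by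
  induction n with
  | zero => rw [Nat.le_zero.mp hkn]; exact hBool _
  | succ n ih =>
      rcases Nat.eq_or_lt_of_le hkn with h | h
      · rw [← h]; exact hBool _
      · have hk : k ≤ n := Nat.lt_succ_iff.mp h
        have h1 : (bA hBool hatomless f (n+1)).1 * (bA hBool hatomless f n).1
            = (bA hBool hatomless f (n+1)).1 := bnode_le hBool hatomless _ _
        calc (bA hBool hatomless f (n+1)).1 * (bA hBool hatomless f k).1
            = (bA hBool hatomless f (n+1)).1 * (bA hBool hatomless f n).1
              * (bA hBool hatomless f k).1 := by rw [h1]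
          _ = (bA hBool hatomless f (n+1)).1 *
              ((bA hBool hatomless f n).1 * (bA hBool hatomless f k).1) := mul_assoc _ _ _
          _ = _ := by rw [ih hk, h1]

theorem bA_mul_ne_zero (f : ℕ → Bool) (k n : ℕ) :
    (bA hBool hatomless f k).1 * (bA hBool hatomless f n).1 ≠ 0 := by
  rcases le_total k n with h | h
  · rw [bool_comm hBool, bA_chain hBool hatomless f h]; exact (bA hBool hatomless f n).2
  · rw [bA_chain hBool hatomless f h]; exact (bA hBool hatomless f k).2

theorem exists_good_max (f : ℕ → Bool) :
    ∃ M : Set B, IsMaxIdeal M ∧ (∀ n, (bA hBool hatomless f n).1 ∉ M) ∧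
      ∀ x : B, (∃ n, x * (bA hBool hatomless f n).1 = 0) → x ∈ M := by
  classical
  set a : ℕ → B := fun n => (bA hBool hatomless f n).1 with ha
  have hchain : ∀ {k n : ℕ}, k ≤ n → a n * a k = a n := fun h => bA_chain hBool hatomless f h
  have hanz : ∀ k n, a k * a n ≠ 0 := bA_mul_ne_zero hBool hatomless f
  have hidem : ∀ n, a n * a n = a n := fun n => hBool _
  set I₀ : Set B := {x | ∃ n, x * a n = 0} with hI₀
  have habs : ∀ {x : B} {m : ℕ}, x * a m = 0 → ∀ n, m ≤ n → x * a n = 0 := by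
    intro x m hx n hmn
    have h : a n = a n * a m := (hchain hmn).symm
    rw [h, ← mul_assoc, bool_comm hBool x (a n), mul_assoc, hx, mul_zero]
  have hI₀ideal : IsIdeal I₀ := by
    refine ⟨⟨0, zero_mul _⟩, ?_, ?_, ?_⟩
    · rintro x ⟨m, hm⟩ y ⟨n, hn⟩
      refine ⟨max m n, ?_⟩
      rw [add_mul, habs hm _ (le_max_left m n), habs hn _ (le_max_right m n), add_zero]
    · rintro x ⟨n, hn⟩; exact ⟨n, by rw [neg_mul, hn, neg_zero]⟩
    · rintro b x ⟨n, hn⟩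
      constructor
      · exact ⟨n, by rw [mul_assoc, hn, mul_zero]⟩
      · exact ⟨n, by rw [mul_assoc, bool_comm hBool b (a n), ← mul_assoc, hn, zero_mul]⟩
  have hI₀avoid : ∀ n, a n ∉ I₀ := by rintro n ⟨m, hm⟩; exact hanz n m hm
  set S : Set (Set B) := {I | IsIdeal I ∧ ∀ n, a n ∉ I} with hS
  obtain ⟨M, hIM, hMS, hMmax⟩ : ∃ M, I₀ ⊆ M ∧ Maximal (· ∈ S) M := by
    apply zorn_subset_nonempty
    · intro c hcS hc hcne
      refine ⟨⋃₀ c, ⟨⟨?_, ?_, ?_, ?_⟩, ?_⟩, fun s hs => Set.subset_sUnion_of_mem hs⟩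
      · obtain ⟨I, hI⟩ := hcne
        exact ⟨I, hI, (hcS hI).1.1⟩
      · rintro x ⟨I, hI, hxI⟩ y ⟨J, hJ, hyJ⟩
        rcases hc.total hI hJ with h | h
        · exact ⟨J, hJ, (hcS hJ).1.2.1 x (h hxI) y hyJ⟩
        · exact ⟨I, hI, (hcS hI).1.2.1 x hxI y (h hyJ)⟩
      · rintro x ⟨I, hI, hxI⟩; exact ⟨I, hI, (hcS hI).1.2.2.1 x hxI⟩
      · rintro b x ⟨I, hI, hxI⟩
        exact ⟨⟨I, hI, ((hcS hI).1.2.2.2 b x hxI).1⟩, ⟨I, hI, ((hcS hI).1.2.2.2 b x hxI).2⟩⟩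
      · rintro n ⟨I, hI, hnI⟩; exact (hcS hI).2 n hnI
    · exact ⟨hI₀ideal, hI₀avoid⟩
  have hMideal : IsIdeal M := hMS.1
  have hMavoid : ∀ n, a n ∉ M := hMS.2
  refine ⟨M, ⟨hMideal, ?_, ?_⟩, hMavoid, fun x hx => hIM hx⟩
  · intro h
    exact hMavoid 0 (h ▸ Set.mem_univ _)
  · intro J hJ hMJ
    by_cases hJM : J = M
    · exact Or.inl hJM
    · right
      have hJnS : J ∉ S := by
        intro hJS
        exact hJM (Set.Subset.antisymm (hMmax hJS hMJ) hMJ)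
      have hN : ∃ N, a N ∈ J := by
        by_contra h
        push_neg at h
        exact hJnS ⟨hJ, h⟩
      obtain ⟨N, hNJ⟩ := hN
      apply Set.eq_univ_of_forall
      intro z
      have hw : z + z * a N ∈ I₀ := by
        refine ⟨N, ?_⟩
        rw [add_mul, mul_assoc, hidem, bool_add_self hBool]
      have hw' : z + z * a N ∈ J := hMJ (hIM hw)
      have hz : z = (z + z * a N) + z * a N := by
        rw [add_assoc, bool_add_self hBool, add_zero]
      rw [hz]
      exact hJ.2.1 _ hw' _ ((hJ.2.2.2 z _ hNJ).1)

end BoolAux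

/-- A nonzero countable atomless Boolean ring without identity has exactly `2^ℵ₀`
distinct maximal ideals. -/
theorem card_maximal_ideals_of_countable_atomless_boolean_ring
    {B : Type*} [NonUnitalRing B] [Countable B] [Nontrivial B]
    (hBool : ∀ x : B, x * x = x)
    (hatomless : ∀ m : B, m ≠ 0 → ∃ a : B, a ≠ 0 ∧ a ≠ m ∧ a * m = a)
    (hnoid : ¬ ∃ e : B, ∀ x : B, e * x = x ∧ x * e = x) :
    Cardinal.mk {M : Set B // IsMaxIdeal M} = 2 ^ Cardinal.aleph0 := by
  classical
  -- the family of maximal ideals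
  have hgood := exists_good_max hBool hatomless
  set F : (ℕ → Bool) → {M : Set B // IsMaxIdeal M} :=
    fun f => ⟨Classical.choose (hgood f), (Classical.choose_spec (hgood f)).1⟩ with hF
  have hFavoid : ∀ f n, (bA hBool hatomless f n).1 ∉ (F f).1 :=
    fun f => (Classical.choose_spec (hgood f)).2.1
  have hFmem : ∀ f x, (∃ n, x * (bA hBool hatomless f n).1 = 0) → x ∈ (F f).1 :=
    fun f => (Classical.choose_spec (hgood f)).2.2
  have hFinj : Function.Injective F := by
    intro f g hfg
    by_contra hne
    have hex : ∃ n, f n ≠ g n := by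
      by_contra h
      push_neg at h
      exact hne (funext h)
    set n := Nat.find hex with hn
    have hfn : f n ≠ g n := Nat.find_spec hex
    have hlt : ∀ i < n, f i = g i := fun i hi => by
      by_contra h; exact Nat.find_min hex hi h
    have heq : bA hBool hatomless f n = bA hBool hatomless g n :=
      bA_congr hBool hatomless n hlt
    -- the two children are disjoint
    have hdisj : (bA hBool hatomless g (n+1)).1 * (bA hBool hatomless f (n+1)).1 = 0 := by
      show (bnode hBool hatomless (bA hBool hatomless g n) (g n)).1
          * (bnode hBool hatomless (bA hBool hatomless f n) (f n)).1 = 0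
      rw [← heq]
      cases hf : f n <;> cases hg : g n
      · exact absurd (hf.trans hg.symm) hfn
      · rw [bool_comm hBool]
        exact bnode_disj hBool hatomless _
      · exact bnode_disj hBool hatomless _
      · exact absurd (hf.trans hg.symm) hfn
    have hmem : (bA hBool hatomless g (n+1)).1 ∈ (F f).1 :=
      hFmem f _ ⟨n + 1, hdisj⟩
    rw [hfg] at hmem
    exact hFavoid g (n+1) hmem
  -- upper bound
  have hub : Cardinal.mk {M : Set B // IsMaxIdeal M} ≤ 2 ^ Cardinal.aleph0 := by
    calc Cardinal.mk {M : Set B // IsMaxIdeal M} ≤ Cardinal.mk (Set B) := Cardinal.mk_subtype_le _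
      _ = 2 ^ Cardinal.mk B := Cardinal.mk_set
      _ ≤ 2 ^ Cardinal.aleph0 :=
          Cardinal.power_le_power_left two_ne_zero (Cardinal.mk_le_aleph0)
  -- lower bound
  have hlb : 2 ^ Cardinal.aleph0 ≤ Cardinal.mk {M : Set B // IsMaxIdeal M} := by
    have hinj2 : Function.Injective (F ∘ ULift.down.{_, 0}) :=
      hFinj.comp (fun x y h => by cases x; cases y; simp_all)
    have h1 := Cardinal.mk_le_of_injective hinj2
    have h2 : Cardinal.mk (ULift.{_, 0} (ℕ → Bool)) = 2 ^ Cardinal.aleph0 := by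
      rw [Cardinal.mk_uLift]
      have : Cardinal.mk (ℕ → Bool) = 2 ^ Cardinal.aleph0 := by
        rw [← Cardinal.mk_bool, ← Cardinal.mk_nat, Cardinal.power_def]
      rw [this]
      simp [Cardinal.lift_power, Cardinal.lift_aleph0]
    rwa [h2] at h1
  exact le_antisymm hub hlb
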